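/- Let k be a field of characteristic p > 0, A a finite semisimple (i.e., reduced finite) k-algebra, and a₁, a₂ ∈ A. Then a₁ ⊗ 1 − 1 ⊗ a₂ is nilpotent in A ⊗_k A if and only if there exists m ≥ 0 such that a₁^{p^m} = a₂^{p^m} and this common value lies in (the image of) k. -/

import Mathlib

/-!
In characteristic `p` the Frobenius gives
`(a₁ ⊗ 1 - 1 ⊗ a₂) ^ p ^ m = a₁ ^ p ^ m ⊗ 1 - 1 ⊗ a₂ ^ p ^ m`, so nilpotency means that
`a ⊗ 1 = 1 ⊗ b` for `a = a₁ ^ p ^ m`, `b = a₂ ^ p ^ m` and some `m`. Multiplying out gives `a = b`,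
and applying `id ⊗ ψ` for a linear functional with `ψ 1 = 1` gives `a = ψ a • 1 ∈ k`.
-/

open TensorProduct

theorem isNilpotent_iff_exists_pow_pow_eq_zero {M : Type*} [MonoidWithZero M] {p : ℕ} (hp : 1 < p)
    {x : M} : IsNilpotent x ↔ ∃ n, x ^ p ^ n = 0 := by
  refine ⟨fun ⟨n, hn⟩ => ?_, fun ⟨n, hn⟩ => ⟨_, hn⟩⟩
  obtain ⟨m, hm⟩ := pow_unbounded_of_one_lt n hp
  exact ⟨m, pow_eq_zero_of_le hm.le hn⟩

namespace Algebra.TensorProduct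

theorem tmul_one_sub_one_tmul_pow_expChar_pow {R A B : Type*} [CommSemiring R] [CommRing A]
    [CommRing B] [Algebra R A] [Algebra R B] (q : ℕ) [ExpChar (A ⊗[R] B) q] (a : A) (b : B)
    (n : ℕ) : (a ⊗ₜ[R] (1 : B) - 1 ⊗ₜ b) ^ q ^ n = (a ^ q ^ n) ⊗ₜ 1 - 1 ⊗ₜ (b ^ q ^ n) := by
  rw [sub_pow_expChar_pow, tmul_pow, tmul_pow, one_pow, one_pow]

variable {k A : Type*} [Field k] [Ring A] [Algebra k A]

theorem mem_range_algebraMap_of_tmul_one_eq_one_tmul {a : A} (h : a ⊗ₜ[k] (1 : A) = 1 ⊗ₜ a) :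
    a ∈ (algebraMap k A).range := by
  nontriviality A
  obtain ⟨ψ, hψ⟩ := Module.Projective.exists_dual_eq_one k (one_ne_zero : (1 : A) ≠ 0)
  refine ⟨ψ a, ?_⟩
  simpa [hψ, Algebra.algebraMap_eq_smul_one] using
    congrArg ((_root_.TensorProduct.rid k A).toLinearMap ∘ₗ ψ.lTensor A) h.symm

theorem tmul_one_eq_one_tmul_iff {A : Type*} [CommRing A] [Algebra k A] {a b : A} :
    a ⊗ₜ[k] (1 : A) = 1 ⊗ₜ b ↔ a = b ∧ a ∈ (algebraMap k A).range := by
  refine ⟨fun h => ?_, fun ⟨hab, x, hx⟩ => by rw [← hab, ← hx, tmul_one_eq_one_tmul]⟩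
  have hab : a = b := by simpa using congrArg (LinearMap.mul' k A) h
  exact ⟨hab, mem_range_algebraMap_of_tmul_one_eq_one_tmul (hab ▸ h)⟩

end Algebra.TensorProduct

theorem stmt8 (k : Type) [Field k] (p : ℕ) (hp : p.Prime) [CharP k p]
    (A : Type) [CommRing A] [Algebra k A]
    (a₁ a₂ : A) :
    IsNilpotent ((a₁ ⊗ₜ[k] (1 : A) - (1 : A) ⊗ₜ[k] a₂) : A ⊗[k] A) ↔
      ∃ m : ℕ, a₁ ^ p ^ m = a₂ ^ p ^ m ∧ a₁ ^ p ^ m ∈ (algebraMap k A).range := by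
  have : Fact p.Prime := ⟨hp⟩
  nontriviality A
  have : CharP (A ⊗[k] A) p := charP_of_injective_algebraMap' k p
  simp_rw [isNilpotent_iff_exists_pow_pow_eq_zero hp.one_lt,
    Algebra.TensorProduct.tmul_one_sub_one_tmul_pow_expChar_pow, sub_eq_zero,
    Algebra.TensorProduct.tmul_one_eq_one_tmul_iff]
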